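/- arXiv:2110.01765 — 4 statements merged into one kernel-verified Lean document; each statement's English description precedes it below -/
import Mathlib

section
/- Let C : [−1,1] → ℝ be a positive definite function with C(1) = 1. Then for every c ∈ (0,1], C(−c) ≥ −(1 − C(0))·c + C(0). -/
theorem linear_estimate_neg (b : ℕ → ℝ) (hb : ∀ i, 0 ≤ b i) (C : ℝ → ℝ)
    (hC : ∀ c ∈ Set.Icc (-1:ℝ) 1, HasSum (fun i => b i * c ^ i) (C c))
    (hC1 : C 1 = 1) :
    ∀ c ∈ Set.Ioc (0:ℝ) 1, -(1 - C 0) * c + C 0 ≤ C (-c) := by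
  intro c hc
  obtain ⟨hc0, hc1⟩ := hc
  -- C 0 = b 0
  have h0 : HasSum (fun i => b i * (0:ℝ) ^ i) (C 0) := hC 0 (by constructor <;> norm_num)
  have hb0 : HasSum (fun i => b i * (0:ℝ) ^ i) (b 0) := by
    have : HasSum (fun i : ℕ => if i = 0 then b 0 else 0) (b 0) := hasSum_ite_eq 0 (b 0)
    convert this using 2 with i
    rcases Nat.eq_zero_or_pos i with h | h
    · simp [h]
    · simp [pow_eq_zero_iff, Nat.pos_iff_ne_zero.mp h]
  have hC0 : C 0 = b 0 := h0.unique hb0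
  -- HasSum b 1
  have h1 : HasSum b 1 := by
    have := hC 1 (by constructor <;> norm_num)
    simpa [hC1] using this
  -- HasSum of lower bound function
  have hg : HasSum (fun i : ℕ => -c * b i + (if i = 0 then b 0 + c * b 0 else 0))
      (-(1 - C 0) * c + C 0) := by
    have h2 : HasSum (fun i => -c * b i) (-c * 1) := h1.mul_left (-c)
    have h3 : HasSum (fun i : ℕ => if i = 0 then b 0 + c * b 0 else 0) (b 0 + c * b 0) :=
      hasSum_ite_eq 0 _
    have := h2.add h3
    convert this using 1
    rw [hC0]; ring
  have hneg : HasSum (fun i => b i * (-c) ^ i) (C (-c)) := by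
    apply hC
    constructor <;> nlinarith
  refine hasSum_le (fun i => ?_) hg hneg
  rcases Nat.eq_zero_or_pos i with h | h
  · simp [h]
  · have hne : i ≠ 0 := Nat.pos_iff_ne_zero.mp h
    simp only [hne, if_false, add_zero]
    have hpow : -c ≤ (-c) ^ i := by
      have h2 : c ^ i ≤ c := by
        calc c ^ i ≤ c ^ 1 := pow_le_pow_of_le_one (le_of_lt hc0) hc1 h
        _ = c := pow_one c
      have h3 : |(-c) ^ i| = c ^ i := by rw [abs_pow, abs_neg, abs_of_pos hc0]
      nlinarith [neg_abs_le ((-c)^i)]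
    nlinarith [hb i]
end

section
/- Let C be a nontrivial positive definite function on [−1,1] with C(1) = 1 (so C is strictly increasing and strictly convex on [0,1]). If C'(1) ≤ 1, then C has exactly one fixed point in [−1,1], namely c = 1. If C'(1) > 1 and C is not an odd function, then C has exactly two fixed points: one point c* in [0,1) and the point 1. If C is odd and nontrivial, it has exactly three fixed points: −1, 0, and 1. -/
/-!
Termwise Bernoulli, `c ^ i ≥ 1 + i (c - 1)`, gives the tangent-line bound `C c ≥ 1 + d (c - 1)`,
strict as soon as a coefficient of index `≥ 2` is positive; hence `1` is the only fixed point
when `d ≤ 1`. Such a coefficient also makes `C` strictly convex on `[0, 1]`, so there `C` meets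
the diagonal at most twice. When `d > 1`, a truncation of the series already has slope `> 1`
at `1`, so `C c < c` just below `1`, and `C 0 ≥ 0` gives a fixed point in `[0, 1)`; on `[-1, 0)`
a positive even coefficient forces `C c > c`. An odd `C` has `C 0 = 0`, and its fixed points come
in pairs `±c`. The affine maps `b 0 + b 1 x`, which are not strictly convex, are ruled out in
each case by `C ≠ id`.
-/

open Set Filter Topology

lemma one_add_mul_sub_lt_pow {R : Type*} [Field R] [LinearOrder R] [IsStrictOrderedRing R]
    {c : R} (hc : -1 ≤ c) (hc1 : c ≠ 1) {n : ℕ} (hn : 2 ≤ n) : 1 + n * (c - 1) < c ^ n := by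
  obtain ⟨m, rfl⟩ := Nat.exists_eq_add_of_le' hn
  have hm := mul_le_mul_of_nonneg_right (one_add_mul_sub_le_pow hc m) (sq_nonneg c)
  -- `(1 + m (c - 1)) c ^ 2 - (1 + (m + 2) (c - 1)) = (c - 1) ^ 2 (1 + m (1 + c))`
  have hgap : 0 < (c - 1) ^ 2 * (1 + m * (1 + c)) :=
    mul_pos (pow_two_pos_of_ne_zero (sub_ne_zero.2 hc1))
      (by nlinarith [mul_nonneg m.cast_nonneg (neg_le_iff_add_nonneg'.1 hc)])
  push_cast
  rw [pow_add]
  nlinarith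

lemma self_le_pow_of_nonpos {R : Type*} [Field R] [LinearOrder R] [IsStrictOrderedRing R]
    {c : R} (h1 : -1 ≤ c) (h0 : c ≤ 0) (n : ℕ) : c ≤ c ^ n := by
  rcases n.eq_zero_or_pos with rfl | hn
  · simpa using h0.trans zero_le_one
  calc c = -|c| := by rw [abs_of_nonpos h0, neg_neg]
    _ ≤ -|c| ^ n :=
      neg_le_neg (pow_le_of_le_one (abs_nonneg c) (abs_le.2 ⟨h1, by linarith⟩) hn.ne')
    _ = -|c ^ n| := by rw [abs_pow]
    _ ≤ c ^ n := neg_abs_le _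

theorem HasSum.eq_add_of_eq_zero_of_two_le {M : Type*} [AddCommMonoid M] [TopologicalSpace M]
    [T2Space M] {f : ℕ → M} {a : M} (hf : HasSum f a) (h : ∀ i, 2 ≤ i → f i = 0) :
    a = f 0 + f 1 := by
  simpa [Finset.sum_range_succ] using
    hf.unique <| hasSum_sum_of_ne_finset_zero (s := Finset.range 2) fun i hi =>
      h i (by simp at hi; omega)

theorem StrictConvexOn.eq_of_apply_eq_self {f : ℝ → ℝ} (hf : StrictConvexOn ℝ (Icc 0 1) f)
    (hf1 : f 1 = 1) {x y : ℝ} (hx : x ∈ Ico 0 1) (hy : y ∈ Ico 0 1) (hfx : f x = x)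
    (hfy : f y = y) : x = y := by
  have hg : StrictConvexOn ℝ (Icc 0 1) (fun z => f z - z) :=
    hf.sub_concaveOn (concaveOn_id (convex_Icc 0 1))
  have key : ∀ {u v : ℝ}, u ∈ Ico 0 1 → v ∈ Ico 0 1 → f u = u → f v = v → ¬ u < v := by
    intro u v hu hv hfu hfv huv
    have := hg.lt_on_openSegment (Ico_subset_Icc_self hu) (right_mem_Icc.2 zero_le_one)
      hu.2.ne (by rw [openSegment_eq_Ioo hu.2]; exact ⟨huv, hv.2⟩)
    simp [hfu, hfv, hf1] at this
  exact le_antisymm (not_lt.1 (key hy hx hfy hfx)) (not_lt.1 (key hx hy hfx hfy))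

def HasPowerSeriesOnIcc (b : ℕ → ℝ) (C : ℝ → ℝ) : Prop :=
  ∀ c ∈ Icc (-1 : ℝ) 1, HasSum (fun i => b i * c ^ i) (C c)

namespace HasPowerSeriesOnIcc

variable {b : ℕ → ℝ} {C : ℝ → ℝ} {d : ℝ}

theorem apply_zero (hC : HasPowerSeriesOnIcc b C) : C 0 = b 0 :=
  (hC 0 (by norm_num)).unique <| by
    simpa using hasSum_single (f := fun i => b i * (0 : ℝ) ^ i) 0 fun i hi => by simp [hi]

theorem hasSum_coeff (hC : HasPowerSeriesOnIcc b C) (hC1 : C 1 = 1) : HasSum b 1 := by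
  simpa [hC1] using hC 1 (by norm_num)

theorem continuousOn (hb : ∀ i, 0 ≤ b i) (hC : HasPowerSeriesOnIcc b C) :
    ContinuousOn C (Icc (-1) 1) := by
  have hsum : Summable b := by simpa using (hC 1 (by norm_num)).summable
  refine (continuousOn_tsum (f := fun i (c : ℝ) => b i * c ^ i) (fun i => by fun_prop)
    hsum fun i c hc => ?_).congr fun c hc => ((hC c hc).tsum_eq).symm
  rw [norm_mul, norm_pow, Real.norm_of_nonneg (hb i)]
  exact mul_le_of_le_one_right (hb i) (pow_le_one₀ (norm_nonneg c) (abs_le.2 hc))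

theorem one_add_mul_sub_le (hb : ∀ i, 0 ≤ b i) (hC : HasPowerSeriesOnIcc b C) (hC1 : C 1 = 1)
    (hd : HasSum (fun i : ℕ => (i : ℝ) * b i) d) {c : ℝ} (hc : c ∈ Icc (-1 : ℝ) 1) :
    1 + d * (c - 1) ≤ C c := by
  refine hasSum_le (fun i => ?_) ((hC.hasSum_coeff hC1).add (hd.mul_right (c - 1))) (hC c hc)
  calc b i + i * b i * (c - 1) = b i * (1 + i * (c - 1)) := by ring
    _ ≤ b i * c ^ i := mul_le_mul_of_nonneg_left (one_add_mul_sub_le_pow hc.1 i) (hb i)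

theorem one_add_mul_sub_lt (hb : ∀ i, 0 ≤ b i) (hC : HasPowerSeriesOnIcc b C) (hC1 : C 1 = 1)
    (hd : HasSum (fun i : ℕ => (i : ℝ) * b i) d) {k : ℕ} (hk : 2 ≤ k) (hbk : 0 < b k)
    {c : ℝ} (hc : c ∈ Ico (-1 : ℝ) 1) : 1 + d * (c - 1) < C c := by
  have hc' : c ∈ Icc (-1 : ℝ) 1 := Ico_subset_Icc_self hc
  refine hasSum_lt (i := k) (fun i => ?_) ?_
    ((hC.hasSum_coeff hC1).add (hd.mul_right (c - 1))) (hC c hc')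
  · calc b i + i * b i * (c - 1) = b i * (1 + i * (c - 1)) := by ring
      _ ≤ b i * c ^ i := mul_le_mul_of_nonneg_left (one_add_mul_sub_le_pow hc.1 i) (hb i)
  · calc b k + k * b k * (c - 1) = b k * (1 + k * (c - 1)) := by ring
      _ < b k * c ^ k := mul_lt_mul_of_pos_left (one_add_mul_sub_lt_pow hc.1 hc.2.ne hk) hbk

theorem strictConvexOn (hb : ∀ i, 0 ≤ b i) (hC : HasPowerSeriesOnIcc b C) {k : ℕ} (hk : 2 ≤ k)
    (hbk : 0 < b k) : StrictConvexOn ℝ (Icc 0 1) C := by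
  have hsub : Icc (0 : ℝ) 1 ⊆ Icc (-1) 1 := Icc_subset_Icc_left (by norm_num)
  refine ⟨convex_Icc 0 1, fun x hx y hy hxy s t hs ht hst => ?_⟩
  simp only [smul_eq_mul] at hst ⊢
  have hmem : s * x + t * y ∈ Icc (0 : ℝ) 1 := by
    simpa using convex_Icc (0 : ℝ) 1 hx hy hs.le ht.le hst
  refine hasSum_lt (i := k) (fun i => ?_) ?_ (hC _ (hsub hmem))
    (((hC x (hsub hx)).mul_left s).add ((hC y (hsub hy)).mul_left t))
  · have := (convexOn_pow i).2 hx.1 hy.1 hs.le ht.le hst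
    simp only [smul_eq_mul] at this
    nlinarith [mul_le_mul_of_nonneg_left this (hb i)]
  · have := (strictConvexOn_pow hk).2 hx.1 hy.1 hxy hs ht hst
    simp only [smul_eq_mul] at this
    nlinarith [mul_lt_mul_of_pos_left this hbk]

theorem exists_two_le_coeff_pos (hb : ∀ i, 0 ≤ b i) (hC : HasPowerSeriesOnIcc b C)
    (hC1 : C 1 = 1) (hd : HasSum (fun i : ℕ => (i : ℝ) * b i) d)
    (hni : ¬ ∀ x ∈ Icc (-1 : ℝ) 1, C x = x) (h : 1 ≤ d ∨ b 0 = 0) : ∃ k, 2 ≤ k ∧ 0 < b k := by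
  by_contra! hk
  have hb2 : ∀ i, 2 ≤ i → b i = 0 := fun i hi => (hk i hi).antisymm (hb i)
  have hb01 : 1 = b 0 + b 1 := (hC.hasSum_coeff hC1).eq_add_of_eq_zero_of_two_le hb2
  have hd1 : d = b 1 := by simpa using hd.eq_add_of_eq_zero_of_two_le fun i hi => by simp [hb2 i hi]
  have hb0 : b 0 = 0 := by rcases h with h | h <;> linarith [hb 0]
  refine hni fun x hx => ?_
  simpa [hb0, show b 1 = 1 by linarith] using
    (hC x hx).eq_add_of_eq_zero_of_two_le fun i hi => by simp [hb2 i hi]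

theorem self_lt_apply_of_le_one (hb : ∀ i, 0 ≤ b i) (hC : HasPowerSeriesOnIcc b C)
    (hC1 : C 1 = 1) (hd : HasSum (fun i : ℕ => (i : ℝ) * b i) d)
    (hni : ¬ ∀ x ∈ Icc (-1 : ℝ) 1, C x = x) (hd1 : d ≤ 1) {c : ℝ} (hc : c ∈ Ico (-1 : ℝ) 1) :
    c < C c := by
  rcases hd1.lt_or_eq with hd1 | rfl
  · nlinarith [hC.one_add_mul_sub_le hb hC1 hd (Ico_subset_Icc_self hc), hc.2]
  · obtain ⟨k, hk, hbk⟩ := hC.exists_two_le_coeff_pos hb hC1 hd hni (Or.inl le_rfl)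
    simpa using hC.one_add_mul_sub_lt hb hC1 hd hk hbk hc

theorem exists_even_coeff_pos (hb : ∀ i, 0 ≤ b i) (hC : HasPowerSeriesOnIcc b C)
    (hodd : ¬ ∀ x ∈ Icc (-1 : ℝ) 1, C (-x) = -C x) : ∃ j, Even j ∧ 0 < b j := by
  by_contra! h
  refine hodd fun x hx => (hC (-x) ⟨by linarith [hx.2], by linarith [hx.1]⟩).unique ?_
  have hterm : (fun i => b i * (-x) ^ i) = fun i => -(b i * x ^ i) := by
    funext i
    rcases Nat.even_or_odd i with he | ho
    · simp [(h i he).antisymm (hb i)]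
    · rw [ho.neg_pow]
      ring
  exact hterm ▸ (hC x hx).neg

theorem self_lt_apply_of_neg (hb : ∀ i, 0 ≤ b i) (hC : HasPowerSeriesOnIcc b C) (hC1 : C 1 = 1)
    {j : ℕ} (hj : Even j) (hbj : 0 < b j) {c : ℝ} (hc : c ∈ Ico (-1 : ℝ) 0) : c < C c := by
  simpa using hasSum_lt (i := j)
    (fun i => mul_le_mul_of_nonneg_left (self_le_pow_of_nonpos hc.1 hc.2.le i) (hb i))
    (mul_lt_mul_of_pos_left (hc.2.trans_le (hj.pow_nonneg c)) hbj)
    ((hC.hasSum_coeff hC1).mul_right c) (hC c ⟨hc.1, hc.2.le.trans zero_le_one⟩)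

theorem exists_apply_lt_self (hb : ∀ i, 0 ≤ b i) (hC : HasPowerSeriesOnIcc b C) (hC1 : C 1 = 1)
    (hd : HasSum (fun i : ℕ => (i : ℝ) * b i) d) (hd1 : 1 < d) : ∃ c ∈ Ioo (0 : ℝ) 1, C c < c := by
  obtain ⟨N, hN⟩ := ((tendsto_order.1 hd.tendsto_sum_nat).1 1 hd1).exists
  set p : ℝ → ℝ := fun c => ∑ i ∈ Finset.range N, b i * c ^ i
  have hp : ∀ c ∈ Icc (0 : ℝ) 1, p 1 - p c ≤ 1 - C c := by
    intro c hc
    have hsum : HasSum (fun i => b i * (1 - c ^ i)) (1 - C c) := by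
      simpa [mul_sub, hC1] using (hC 1 (by norm_num)).sub (hC c ⟨by linarith [hc.1], hc.2⟩)
    calc p 1 - p c = ∑ i ∈ Finset.range N, b i * (1 - c ^ i) := by
          simp [p, mul_sub, Finset.sum_sub_distrib]
      _ ≤ 1 - C c := sum_le_hasSum _
          (fun i _ => mul_nonneg (hb i) (sub_nonneg.2 (pow_le_one₀ hc.1 hc.2))) hsum
  have hderiv : HasDerivAt p (∑ i ∈ Finset.range N, (i : ℝ) * b i) 1 := by
    simpa [mul_comm] using
      HasDerivAt.fun_sum (u := Finset.range N) fun i _ => (hasDerivAt_pow i (1 : ℝ)).const_mul (b i)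
  have hslope := hasDerivAt_iff_tendsto_slope.1 (hderiv.sub (hasDerivAt_id' 1))
  have hpos : ∀ᶠ c in 𝓝[<] 1, (0 : ℝ) < slope (p - fun c => c) 1 c :=
    nhdsLT_le_nhdsNE 1 (hslope.eventually (eventually_gt_nhds (sub_pos.2 hN)))
  obtain ⟨c, hc_slope, hc⟩ := (hpos.and (Ioo_mem_nhdsLT one_pos)).exists
  refine ⟨c, hc, ?_⟩
  have hpc : p c - c < p 1 - 1 := (slope_pos_iff_gt hc.2).1 hc_slope
  linarith [hp c (Ioo_subset_Icc_self hc)]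

theorem exists_apply_eq_self (hb : ∀ i, 0 ≤ b i) (hC : HasPowerSeriesOnIcc b C) (hC1 : C 1 = 1)
    (hd : HasSum (fun i : ℕ => (i : ℝ) * b i) d) (hd1 : 1 < d) :
    ∃ cs ∈ Ico (0 : ℝ) 1, C cs = cs := by
  obtain ⟨c, hc, hCc⟩ := hC.exists_apply_lt_self hb hC1 hd hd1
  have hcont : ContinuousOn (fun x => C x - x) (Icc 0 c) :=
    ((hC.continuousOn hb).mono (Icc_subset_Icc (by norm_num) hc.2.le)).sub continuousOn_id
  obtain ⟨cs, hcs, hfix⟩ :=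
    intermediate_value_Icc' hc.1.le hcont
      (show (0 : ℝ) ∈ Icc (C c - c) (C 0 - 0) by simp [hC.apply_zero, hb 0, hCc.le])
  exact ⟨cs, ⟨hcs.1, hcs.2.trans_lt hc.2⟩, sub_eq_zero.1 hfix⟩

theorem apply_eq_self_iff_of_le_one (hb : ∀ i, 0 ≤ b i) (hC : HasPowerSeriesOnIcc b C)
    (hC1 : C 1 = 1) (hd : HasSum (fun i : ℕ => (i : ℝ) * b i) d)
    (hni : ¬ ∀ x ∈ Icc (-1 : ℝ) 1, C x = x) (hd1 : d ≤ 1) {c : ℝ} (hc : c ∈ Icc (-1 : ℝ) 1) :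
    C c = c ↔ c = 1 := by
  refine ⟨fun hfix => by_contra fun hne => ?_, fun h => h ▸ hC1⟩
  exact (hC.self_lt_apply_of_le_one hb hC1 hd hni hd1 ⟨hc.1, hc.2.lt_of_ne hne⟩).ne' hfix

theorem exists_apply_eq_self_iff_of_one_lt (hb : ∀ i, 0 ≤ b i) (hC : HasPowerSeriesOnIcc b C)
    (hC1 : C 1 = 1) (hd : HasSum (fun i : ℕ => (i : ℝ) * b i) d)
    (hni : ¬ ∀ x ∈ Icc (-1 : ℝ) 1, C x = x) (hd1 : 1 < d)
    (hodd : ¬ ∀ x ∈ Icc (-1 : ℝ) 1, C (-x) = -C x) :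
    ∃ cs ∈ Ico (0 : ℝ) 1, ∀ c ∈ Icc (-1 : ℝ) 1, (C c = c ↔ c = cs ∨ c = 1) := by
  obtain ⟨k, hk, hbk⟩ := hC.exists_two_le_coeff_pos hb hC1 hd hni (Or.inl hd1.le)
  obtain ⟨j, hj, hbj⟩ := hC.exists_even_coeff_pos hb hodd
  obtain ⟨cs, hcs, hfix⟩ := hC.exists_apply_eq_self hb hC1 hd hd1
  refine ⟨cs, hcs, fun c hc => ⟨fun hc' => ?_, ?_⟩⟩
  · rcases lt_or_ge c 0 with hneg | hnonneg
    · exact absurd hc' (hC.self_lt_apply_of_neg hb hC1 hj hbj ⟨hc.1, hneg⟩).ne'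
    rcases hc.2.eq_or_lt with h1 | h1
    · exact Or.inr h1
    · exact Or.inl <|
        (hC.strictConvexOn hb hk hbk).eq_of_apply_eq_self hC1 ⟨hnonneg, h1⟩ hcs hc' hfix
  · rintro (rfl | rfl)
    exacts [hfix, hC1]

theorem apply_eq_self_iff_of_odd (hb : ∀ i, 0 ≤ b i) (hC : HasPowerSeriesOnIcc b C)
    (hC1 : C 1 = 1) (hd : HasSum (fun i : ℕ => (i : ℝ) * b i) d)
    (hni : ¬ ∀ x ∈ Icc (-1 : ℝ) 1, C x = x) (hodd : ∀ x ∈ Icc (-1 : ℝ) 1, C (-x) = -C x)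
    {c : ℝ} (hc : c ∈ Icc (-1 : ℝ) 1) : C c = c ↔ c = -1 ∨ c = 0 ∨ c = 1 := by
  have hC0 : C 0 = 0 := by linarith [neg_zero (G := ℝ) ▸ hodd 0 (by norm_num)]
  obtain ⟨k, hk, hbk⟩ := hC.exists_two_le_coeff_pos hb hC1 hd hni (Or.inr (hC.apply_zero ▸ hC0))
  have hnonneg : ∀ x ∈ Icc (0 : ℝ) 1, C x = x → x = 0 ∨ x = 1 := fun x hx hfix =>
    hx.2.eq_or_lt.elim Or.inr fun h => Or.inl <|
      (hC.strictConvexOn hb hk hbk).eq_of_apply_eq_self hC1 ⟨hx.1, h⟩ ⟨le_rfl, one_pos⟩ hfix hC0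
  refine ⟨fun hfix => ?_, ?_⟩
  · rcases le_total 0 c with h | h
    · exact Or.inr (hnonneg c ⟨h, hc.2⟩ hfix)
    · rcases hnonneg (-c) ⟨by linarith, by linarith [hc.1]⟩ (by rw [hodd c hc, hfix]) with h | h
      · exact Or.inr (Or.inl (neg_eq_zero.1 h))
      · exact Or.inl (by linarith)
  · rintro (rfl | rfl | rfl)
    exacts [by simpa [hC1] using hodd 1 (by norm_num), hC0, hC1]

end HasPowerSeriesOnIcc

theorem fixed_points_of_C_general (b : ℕ → ℝ) (hb : ∀ i, 0 ≤ b i) (C : ℝ → ℝ)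
    (hC : ∀ c ∈ Set.Icc (-1:ℝ) 1, HasSum (fun i => b i * c ^ i) (C c))
    (hC1 : C 1 = 1)
    (hni : ¬ ∀ x ∈ Set.Icc (-1:ℝ) 1, C x = x)
    (d : ℝ) (hd : HasSum (fun i : ℕ => (i : ℝ) * b i) d) :
    (d ≤ 1 → ∀ c ∈ Set.Icc (-1:ℝ) 1, (C c = c ↔ c = 1)) ∧
    (1 < d → (¬ ∀ x ∈ Set.Icc (-1:ℝ) 1, C (-x) = -C x) →
      ∃ cs ∈ Set.Ico (0:ℝ) 1, ∀ c ∈ Set.Icc (-1:ℝ) 1, (C c = c ↔ c = cs ∨ c = 1)) ∧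
    ((∀ x ∈ Set.Icc (-1:ℝ) 1, C (-x) = -C x) →
      ∀ c ∈ Set.Icc (-1:ℝ) 1, (C c = c ↔ c = -1 ∨ c = 0 ∨ c = 1)) :=
  ⟨fun hd1 _ hc => HasPowerSeriesOnIcc.apply_eq_self_iff_of_le_one hb hC hC1 hd hni hd1 hc,
    HasPowerSeriesOnIcc.exists_apply_eq_self_iff_of_one_lt hb hC hC1 hd hni,
    fun hodd _ hc => HasPowerSeriesOnIcc.apply_eq_self_iff_of_odd hb hC hC1 hd hni hodd hc⟩

theorem fixed_points_of_C (b : ℕ → ℝ) (hb : ∀ i, 0 ≤ b i) (C : ℝ → ℝ)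
    (hC : ∀ c ∈ Set.Icc (-1:ℝ) 1, HasSum (fun i => b i * c ^ i) (C c))
    (hC1 : C 1 = 1)
    (hnc : ¬ ∀ x ∈ Set.Icc (-1:ℝ) 1, C x = C 0)
    (hni : ¬ ∀ x ∈ Set.Icc (-1:ℝ) 1, C x = x)
    (d : ℝ) (hd : HasSum (fun i : ℕ => (i : ℝ) * b i) d) :
    (d ≤ 1 → ∀ c ∈ Set.Icc (-1:ℝ) 1, (C c = c ↔ c = 1)) ∧
    (1 < d → (¬ ∀ x ∈ Set.Icc (-1:ℝ) 1, C (-x) = -C x) →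
      ∃ cs ∈ Set.Ico (0:ℝ) 1, ∀ c ∈ Set.Icc (-1:ℝ) 1, (C c = c ↔ c = cs ∨ c = 1)) ∧
    ((∀ x ∈ Set.Icc (-1:ℝ) 1, C (-x) = -C x) →
      ∀ c ∈ Set.Icc (-1:ℝ) 1, (C c = c ↔ c = -1 ∨ c = 0 ∨ c = 1)) :=
  fixed_points_of_C_general b hb C hC hC1 hni d hd
end

section
/- Let C be a nontrivial positive definite function on [−1,1] with C(1) = 1 and C'(1) < 1. Then for all c ∈ [−1,1] and all n ≥ 1, the n-fold iterate satisfies (C'(1))ⁿ (c − 1) + 1 ≤ Cⁿ(c) ≤ 1; in particular the fixed point 1 is a global attractor of [−1,1] with linear convergence rate C'(1). -/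
theorem global_attractor_small_derivative (b : ℕ → ℝ) (hb : ∀ i, 0 ≤ b i) (C : ℝ → ℝ)
    (hC : ∀ c ∈ Set.Icc (-1:ℝ) 1, HasSum (fun i => b i * c ^ i) (C c))
    (hC1 : C 1 = 1)
    (hnc : ¬ ∀ x ∈ Set.Icc (-1:ℝ) 1, C x = C 0)
    (hni : ¬ ∀ x ∈ Set.Icc (-1:ℝ) 1, C x = x)
    (d : ℝ) (hd : HasSum (fun i : ℕ => (i : ℝ) * b i) d) (hd1 : d < 1) :
    ∀ c ∈ Set.Icc (-1:ℝ) 1, ∀ n : ℕ, 1 ≤ n →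
      d ^ n * (c - 1) + 1 ≤ C^[n] c ∧ C^[n] c ≤ 1 := by
  have hsum1 : HasSum b 1 := by
    have := hC 1 (by norm_num)
    simpa [hC1] using this
  have habs : ∀ x ∈ Set.Icc (-1:ℝ) 1, ∀ i : ℕ, |x ^ i| ≤ 1 := by
    intro x hx i
    rw [abs_pow]
    exact pow_le_one₀ (abs_nonneg x) (abs_le.2 ⟨hx.1, hx.2⟩)
  have hmem : ∀ x ∈ Set.Icc (-1:ℝ) 1, C x ∈ Set.Icc (-1:ℝ) 1 := by
    intro x hx
    constructor
    · have hneg : HasSum (fun i => -(b i)) (-1) := hsum1.neg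
      refine hasSum_le (fun i => ?_) hneg (hC x hx)
      have h := (abs_le.1 (habs x hx i)).1
      nlinarith [hb i]
    · refine hasSum_le (fun i => ?_) (hC x hx) hsum1
      have h := (abs_le.1 (habs x hx i)).2
      nlinarith [hb i]
  have hd0 : 0 ≤ d := hasSum_le (fun j => mul_nonneg (Nat.cast_nonneg j) (hb j)) hasSum_zero hd
  have hkey : ∀ i : ℕ, ∀ x ∈ Set.Icc (-1:ℝ) 1, 1 - x ^ i ≤ i * (1 - x) := by
    intro i x hx
    induction i with
    | zero => simp
    | succ n ih =>
      have h1 : x ^ n ≤ 1 := (abs_le.1 (habs x hx n)).2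
      have h2 : x ≤ 1 := hx.2
      have h3 : -1 ≤ x ^ n := (abs_le.1 (habs x hx n)).1
      have h4 : x ^ (n + 1) = x ^ n * x := pow_succ x n
      push_cast
      nlinarith
  have hlow : ∀ x ∈ Set.Icc (-1:ℝ) 1, d * (x - 1) + 1 ≤ C x := by
    intro x hx
    have h1 : HasSum (fun i => b i * x ^ i - b i) (C x - 1) := (hC x hx).sub hsum1
    have h2 : HasSum (fun i : ℕ => (i : ℝ) * b i * (x - 1)) (d * (x - 1)) := hd.mul_right _
    have hle : d * (x - 1) ≤ C x - 1 := by
      refine hasSum_le (fun i => ?_) h2 h1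
      have hk := hkey i x hx
      nlinarith [hb i]
    linarith
  intro c hc n hn
  have main : ∀ m : ℕ, (d ^ m * (c - 1) + 1 ≤ C^[m] c ∧ C^[m] c ≤ 1) ∧
      C^[m] c ∈ Set.Icc (-1:ℝ) 1 := by
    intro m
    induction m with
    | zero =>
      simp only [Function.iterate_zero, id_eq, pow_zero]
      exact ⟨⟨by linarith, hc.2⟩, hc⟩
    | succ m ih =>
      obtain ⟨⟨hl, _⟩, hm⟩ := ih
      have hx := hmem _ hm
      rw [Function.iterate_succ_apply']
      refine ⟨⟨?_, hx.2⟩, hx⟩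
      have hmul : d * (d ^ m * (c - 1)) ≤ d * (C^[m] c - 1) :=
        mul_le_mul_of_nonneg_left (by linarith) hd0
      calc d ^ (m + 1) * (c - 1) + 1 = d * (d ^ m * (c - 1)) + 1 := by ring
        _ ≤ d * (C^[m] c - 1) + 1 := by linarith
        _ ≤ C (C^[m] c) := hlow _ hm
  exact (main n).1
end

section
/- Let C(c) = Σᵢ₌₀^∞ bᵢcⁱ with bᵢ ≥ 0 and Σᵢ bᵢ = 1 (so C(1) = 1). Then (1/4)(1 − C'(0)) ≤ max over c ∈ [−1,1] of |C(c) − c| ≤ 2(1 − C'(0)), and max over c ∈ [−1,1] of |C'(c) − 1| ≤ 2(1 − C'(0)) + (C'(1) − 1). -/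
/-!
Since `∑ bᵢ = 1`, every deviation is a series `∑ bᵢ gᵢ` whose term of index `1` vanishes:
`C c - c = ∑ bᵢ (cⁱ - c)` and `C' c - 1 = ∑ bᵢ (i cⁱ⁻¹ - 1)`. On `[-1, 1]` one has
`|cⁱ - c| ≤ 2` and `|i cⁱ⁻¹ - 1| ≤ i + 1`, and the remaining mass is `∑_{i ≠ 1} bᵢ = 1 - b₁ = 1 - C'(0)`.
For the lower bound, `(-1/2)ⁱ + 1/2 ≥ 1/4` for every `i ≠ 1`.
-/

section DropOneTerm

variable {ι : Type*} {f g : ι → ℝ} {s t : ℝ}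

theorem HasSum.abs_le_sub_of_abs_le_of_ne (hf : HasSum f s) (hg : HasSum g t) (j : ι)
    (hfj : f j = 0) (hfg : ∀ i ≠ j, |f i| ≤ g i) : |s| ≤ t - g j := by
  classical
  have hbound : ∀ i, ‖f i‖ ≤ Function.update g j 0 i := by
    intro i
    rcases eq_or_ne i j with rfl | hi
    · simp [hfj]
    · simpa [Function.update_of_ne hi] using hfg i hi
  have h := hf.norm_le_of_bounded (hg.update j 0) hbound
  rw [Real.norm_eq_abs] at h
  linarith

theorem HasSum.sub_le_of_le_of_ne (hg : HasSum g t) (hf : HasSum f s) (j : ι)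
    (hfj : f j = 0) (hgf : ∀ i ≠ j, g i ≤ f i) : t - g j ≤ s := by
  classical
  have hbound : ∀ i, Function.update g j 0 i ≤ f i := by
    intro i
    rcases eq_or_ne i j with rfl | hi
    · simp [hfj]
    · simpa [Function.update_of_ne hi] using hgf i hi
  linarith [hasSum_le hbound (hg.update j 0) hf]

end DropOneTerm

theorem hasSum_natCast_mul_mul_zero_pow_pred {R : Type*} [Semiring R] [TopologicalSpace R]
    (b : ℕ → R) : HasSum (fun i : ℕ => (i : R) * b i * 0 ^ (i - 1)) (b 1) := by
  convert hasSum_single (f := fun i : ℕ => (i : R) * b i * 0 ^ (i - 1)) 1 ?_ using 1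
  · simp
  · rintro (_ | _ | n) hn
    · simp
    · exact absurd rfl hn
    · simp

theorem quarter_le_neg_half_pow_add_half {n : ℕ} (hn : n ≠ 1) :
    (1 / 4 : ℝ) ≤ (-(1 / 2)) ^ n + 1 / 2 := by
  rcases n with _ | _ | n
  · norm_num
  · exact absurd rfl hn
  · have hsq : |(-(1 / 2) : ℝ) ^ (n + 2)| ≤ 1 / 4 := by
      rw [abs_pow]
      calc |(-(1 / 2) : ℝ)| ^ (n + 2) ≤ |(-(1 / 2) : ℝ)| ^ 2 :=
            pow_le_pow_of_le_one (abs_nonneg _) (by norm_num) (by omega)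
        _ = 1 / 4 := by norm_num
    linarith [neg_le_of_abs_le hsq]

theorem abs_pow_sub_self_le_two {c : ℝ} (hc : |c| ≤ 1) (n : ℕ) : |c ^ n - c| ≤ 2 := by
  calc |c ^ n - c| ≤ |c ^ n| + |c| := abs_sub _ _
    _ ≤ 1 + 1 := by
        gcongr
        rw [abs_pow]
        exact pow_le_one₀ (abs_nonneg c) hc
    _ = 2 := by norm_num

theorem abs_natCast_mul_pow_pred_sub_one_le {c : ℝ} (hc : |c| ≤ 1) (n : ℕ) :
    |n * c ^ (n - 1) - 1| ≤ n + 1 := by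
  calc |n * c ^ (n - 1) - 1| ≤ |n * c ^ (n - 1)| + |1| := abs_sub _ _
    _ ≤ n * 1 + 1 := by
        rw [abs_mul, Nat.abs_cast, abs_pow, abs_one]
        gcongr
        exact pow_le_one₀ (abs_nonneg c) hc
    _ = n + 1 := by ring

section Deviation

variable {b : ℕ → ℝ} (hb : ∀ i, 0 ≤ b i) (hsum : HasSum b 1)
include hb hsum

theorem quarter_mul_one_sub_le_abs_of_hasSum_neg_half {s : ℝ}
    (hs : HasSum (fun i => b i * (-(1 / 2)) ^ i) s) :
    1 / 4 * (1 - b 1) ≤ |s - -(1 / 2)| := by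
  have hdev := hs.sub (hsum.mul_right (-(1 / 2)))
  simp only [one_mul] at hdev
  have key := (hsum.mul_left (1 / 4)).sub_le_of_le_of_ne hdev 1 (by simp) fun i hi => by
    rw [← mul_sub, sub_neg_eq_add, mul_comm]
    exact mul_le_mul_of_nonneg_left (quarter_le_neg_half_pow_add_half hi) (hb i)
  linarith [le_abs_self (s - -(1 / 2))]

theorem abs_sub_le_of_hasSum_mul_pow {c s : ℝ} (hc : |c| ≤ 1)
    (hs : HasSum (fun i => b i * c ^ i) s) : |s - c| ≤ 2 * (1 - b 1) := by
  have hdev := hs.sub (hsum.mul_right c)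
  simp only [one_mul] at hdev
  have key := hdev.abs_le_sub_of_abs_le_of_ne (hsum.mul_left 2) 1 (by simp) fun i _ => by
    rw [← mul_sub, abs_mul, abs_of_nonneg (hb i), mul_comm]
    exact mul_le_mul_of_nonneg_right (abs_pow_sub_self_le_two hc i) (hb i)
  linarith

theorem abs_sub_one_le_of_hasSum_natCast_mul_mul_pow_pred {c s d : ℝ} (hc : |c| ≤ 1)
    (hs : HasSum (fun i : ℕ => (i : ℝ) * b i * c ^ (i - 1)) s)
    (hd : HasSum (fun i : ℕ => (i : ℝ) * b i) d) :
    |s - 1| ≤ 2 * (1 - b 1) + (d - 1) := by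
  have key := (hs.sub hsum).abs_le_sub_of_abs_le_of_ne (hd.add hsum) 1 (by simp) fun i _ => by
    rw [show (i : ℝ) * b i * c ^ (i - 1) - b i = b i * (i * c ^ (i - 1) - 1) by ring,
      abs_mul, abs_of_nonneg (hb i), show (i : ℝ) * b i + b i = b i * (i + 1) by ring]
    exact mul_le_mul_of_nonneg_left (abs_natCast_mul_pow_pred_sub_one_le hc i) (hb i)
  simp only [Nat.cast_one, one_mul] at key
  linarith

end Deviation

theorem deviation_bound (b : ℕ → ℝ) (hb : ∀ i, 0 ≤ b i) (hsum : HasSum b 1)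
    (C D : ℝ → ℝ)
    (hC : ∀ c ∈ Set.Icc (-1:ℝ) 1, HasSum (fun i => b i * c ^ i) (C c))
    (hD : ∀ c ∈ Set.Icc (-1:ℝ) 1, HasSum (fun i : ℕ => (i : ℝ) * b i * c ^ (i - 1)) (D c)) :
    (∃ c ∈ Set.Icc (-1:ℝ) 1, (1 / 4) * (1 - D 0) ≤ |C c - c|) ∧
    (∀ c ∈ Set.Icc (-1:ℝ) 1, |C c - c| ≤ 2 * (1 - D 0)) ∧
    (∀ c ∈ Set.Icc (-1:ℝ) 1, |D c - 1| ≤ 2 * (1 - D 0) + (D 1 - 1)) := by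
  have hD0 : D 0 = b 1 :=
    (hD 0 (by norm_num)).unique (hasSum_natCast_mul_mul_zero_pow_pred b)
  have hD1 : HasSum (fun i : ℕ => (i : ℝ) * b i) (D 1) := by
    simpa using hD 1 (by norm_num)
  rw [hD0]
  refine ⟨⟨-(1 / 2), by norm_num, ?_⟩, fun c hc => ?_, fun c hc => ?_⟩
  · exact quarter_mul_one_sub_le_abs_of_hasSum_neg_half hb hsum (hC _ (by norm_num))
  · exact abs_sub_le_of_hasSum_mul_pow hb hsum (abs_le.mpr hc) (hC c hc)
  · exact abs_sub_one_le_of_hasSum_natCast_mul_mul_pow_pred hb hsum (abs_le.mpr hc) (hD c hc) hD1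
end
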